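/- arXiv:2304.01940 — 2 statements merged into one kernel-verified Lean document; each statement's English description precedes it below -/
import Mathlib

section
/- Connes' joint distribution lemma (matrix case): Let ρ and σ be positive semidefinite n×n complex matrices and let τ be the normalized trace τ(A) = (1/n)Tr(A), with ‖A‖₂ = √(τ(A*A)). Then ∫₀^∞ ‖χ_{≥√λ}(ρ) − χ_{≥√λ}(σ)‖₂² dλ ≤ ‖ρ − σ‖₂ · ‖ρ + σ‖₂. -/
open MeasureTheory Matrix ComplexOrder

/-- The spectral projection `χ_{≥t}(σ)` of a Hermitian matrix `σ` onto the
eigenvalues that are `≥ t`, defined via the spectral decomposition. -/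
noncomputable def specProj {n : ℕ} {σ : Matrix (Fin n) (Fin n) ℂ}
    (hσ : σ.IsHermitian) (t : ℝ) : Matrix (Fin n) (Fin n) ℂ :=
  (hσ.eigenvectorUnitary : Matrix (Fin n) (Fin n) ℂ) *
    Matrix.diagonal (fun i => if t ≤ hσ.eigenvalues i then (1 : ℂ) else 0) *
    (star (hσ.eigenvectorUnitary : Matrix (Fin n) (Fin n) ℂ))

/-- The Hilbert–Schmidt norm `‖A‖₂ = √(τ(A*A))` associated with the
normalized trace `τ(X) = (1/n) Tr X`. -/
noncomputable def hsNorm {n : ℕ} (A : Matrix (Fin n) (Fin n) ℂ) : ℝ :=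
  Real.sqrt ((Matrix.trace (Aᴴ * A)).re / n)

/-!
Diagonalize `ρ = U diag(a) U*` and `σ = V diag(b) V*`. With `W = U* V`, the weights
`μ i j = |W i j|² / n` form a probability on pairs of eigenvalues, the joint distribution of
`ρ` and `σ`. Since `U diag(d) U* − V diag(e) V* = U (diag(d) W − W diag(e)) V*` and the `(i, j)`
entry of `diag(d) W − W diag(e)` is `(d i − e j) W i j`, unitary invariance gives
`‖U diag(d) U* − V diag(e) V*‖₂² = ∑ μ i j (d i − e j)²`.
Hence `‖ρ ∓ σ‖₂² = ∑ μ i j (a i ∓ b j)²`, and for the spectral projections at `√λ` the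
summand is `μ i j` times the indicator of `λ` lying between `a i²` and `b j²`, so the integral is
`∑ μ i j |a i² − b j²|`. Weighted Cauchy–Schwarz applied to `|a² − b²| = |a − b| (a + b)`
concludes.
-/

open Set Interval

namespace Matrix

variable {m k : Type*} [Fintype m] [Fintype k]

theorem re_trace_conjTranspose_mul_self (A : Matrix m k ℂ) :
    (Aᴴ * A).trace.re = ∑ i, ∑ j, ‖A i j‖ ^ 2 := by
  simp only [trace, diag, mul_apply, conjTranspose_apply, Complex.re_sum, RCLike.star_def,
    Complex.conj_mul', ← Complex.ofReal_pow, Complex.ofReal_re]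
  exact Finset.sum_comm

variable [DecidableEq m] [DecidableEq k]

theorem trace_conjTranspose_mul_self_unitary_conj {R : Type*} [CommRing R] [StarRing R]
    {U : Matrix m m R} {V : Matrix k k R}
    (hU : U ∈ unitaryGroup m R) (hV : V ∈ unitaryGroup k R) (X : Matrix m k R) :
    ((U * X * star V)ᴴ * (U * X * star V)).trace = (Xᴴ * X).trace := by
  have hU' : star U * U = 1 := mem_unitaryGroup_iff'.mp hU
  have hV' : star V * V = 1 := mem_unitaryGroup_iff'.mp hV
  rw [conjTranspose_mul, conjTranspose_mul, ← star_eq_conjTranspose (star V), star_star,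
    ← star_eq_conjTranspose U,
    show V * (Xᴴ * star U) * (U * X * star V) = V * (Xᴴ * (star U * U) * X) * star V by
      simp only [Matrix.mul_assoc], hU', Matrix.mul_one, trace_mul_cycle, hV', Matrix.one_mul]

theorem conj_diagonal_sub_conj_diagonal {R : Type*} [CommRing R] [StarRing R]
    {U V : Matrix m m R} (hU : U ∈ unitaryGroup m R) (hV : V ∈ unitaryGroup m R) (d e : m → R) :
    U * diagonal d * star U - V * diagonal e * star V
      = U * (diagonal d * (star U * V) - (star U * V) * diagonal e) * star V := by
  have hU' : U * star U = 1 := mem_unitaryGroup_iff.mp hU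
  have hV' : V * star V = 1 := mem_unitaryGroup_iff.mp hV
  simp only [Matrix.mul_sub, Matrix.sub_mul, ← Matrix.mul_assoc, hU', Matrix.one_mul]
  simp only [Matrix.mul_assoc, hV', Matrix.mul_one]

theorem IsHermitian.eq_conj_diagonal_eigenvalues {A : Matrix m m ℂ} (hA : A.IsHermitian) :
    A = (hA.eigenvectorUnitary : Matrix m m ℂ) * diagonal (fun i => (hA.eigenvalues i : ℂ)) *
      star (hA.eigenvectorUnitary : Matrix m m ℂ) :=
  hA.spectral_theorem

end Matrix

theorem hsNorm_conj_diagonal_sub {n : ℕ} {U V : Matrix (Fin n) (Fin n) ℂ}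
    (hU : U ∈ unitaryGroup (Fin n) ℂ) (hV : V ∈ unitaryGroup (Fin n) ℂ) (d e : Fin n → ℝ) :
    hsNorm (U * diagonal (fun i => (d i : ℂ)) * star U - V * diagonal (fun j => (e j : ℂ)) * star V)
      = √(∑ i, ∑ j, ‖(star U * V) i j‖ ^ 2 / n * (d i - e j) ^ 2) := by
  have hentry : ∀ i j, (diagonal (fun i => (d i : ℂ)) * (star U * V)
      - (star U * V) * diagonal (fun j => (e j : ℂ))) i j
        = ((d i - e j : ℝ) : ℂ) * (star U * V) i j := by
    intro i j
    rw [Matrix.sub_apply, diagonal_mul, mul_diagonal]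
    push_cast
    ring
  rw [hsNorm, conj_diagonal_sub_conj_diagonal hU hV,
    trace_conjTranspose_mul_self_unitary_conj hU hV, re_trace_conjTranspose_mul_self]
  simp only [hentry, norm_mul, Complex.norm_real, Real.norm_eq_abs, mul_pow, sq_abs,
    Finset.sum_div]
  congr! 3
  ring

section JointDistribution

variable {n : ℕ} {A B : Matrix (Fin n) (Fin n) ℂ}

noncomputable def jointWeight (hA : A.IsHermitian) (hB : B.IsHermitian) (i j : Fin n) : ℝ :=
  ‖(star (hA.eigenvectorUnitary : Matrix (Fin n) (Fin n) ℂ) * hB.eigenvectorUnitary) i j‖ ^ 2 / n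

theorem jointWeight_nonneg (hA : A.IsHermitian) (hB : B.IsHermitian) (i j : Fin n) :
    0 ≤ jointWeight hA hB i j := by
  unfold jointWeight
  positivity

theorem hsNorm_sub_eq_sqrt_jointWeight (hA : A.IsHermitian) (hB : B.IsHermitian) :
    hsNorm (A - B) =
      √(∑ i, ∑ j, jointWeight hA hB i j * (hA.eigenvalues i - hB.eigenvalues j) ^ 2) := by
  conv_lhs => rw [hA.eq_conj_diagonal_eigenvalues, hB.eq_conj_diagonal_eigenvalues]
  exact hsNorm_conj_diagonal_sub hA.eigenvectorUnitary.2 hB.eigenvectorUnitary.2 _ _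

theorem hsNorm_add_eq_sqrt_jointWeight (hA : A.IsHermitian) (hB : B.IsHermitian) :
    hsNorm (A + B) =
      √(∑ i, ∑ j, jointWeight hA hB i j * (hA.eigenvalues i + hB.eigenvalues j) ^ 2) := by
  conv_lhs => rw [hA.eq_conj_diagonal_eigenvalues, hB.eq_conj_diagonal_eigenvalues,
    ← sub_neg_eq_add, ← Matrix.neg_mul, ← Matrix.mul_neg, diagonal_neg]
  simpa only [jointWeight, Pi.neg_apply, Complex.ofReal_neg, sub_neg_eq_add] using
    hsNorm_conj_diagonal_sub hA.eigenvectorUnitary.2 hB.eigenvectorUnitary.2 _ (-hB.eigenvalues)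

theorem specProj_eq_conj_diagonal (hA : A.IsHermitian) (t : ℝ) :
    specProj hA t = (hA.eigenvectorUnitary : Matrix (Fin n) (Fin n) ℂ) *
      diagonal (fun i => ((if t ≤ hA.eigenvalues i then 1 else 0 : ℝ) : ℂ)) *
      star (hA.eigenvectorUnitary : Matrix (Fin n) (Fin n) ℂ) := by
  simp only [specProj, apply_ite ((↑) : ℝ → ℂ), Complex.ofReal_one, Complex.ofReal_zero]

theorem hsNorm_specProj_sub_sq (hA : A.IsHermitian) (hB : B.IsHermitian) (t : ℝ) :
    hsNorm (specProj hA t - specProj hB t) ^ 2 = ∑ i, ∑ j, jointWeight hA hB i j *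
      ((if t ≤ hA.eigenvalues i then (1 : ℝ) else 0) -
        if t ≤ hB.eigenvalues j then 1 else 0) ^ 2 := by
  rw [specProj_eq_conj_diagonal, specProj_eq_conj_diagonal,
    hsNorm_conj_diagonal_sub hA.eigenvectorUnitary.2 hB.eigenvectorUnitary.2,
    Real.sq_sqrt (by positivity)]
  rfl

end JointDistribution

theorem sq_ite_le_sub_ite_le_eq_indicator_uIoc (a b l : ℝ) :
    ((if l ≤ a then (1 : ℝ) else 0) - if l ≤ b then 1 else 0) ^ 2 = (Ι a b).indicator 1 l := by
  rcases le_total a b with h | h <;> simp only [uIoc_of_le, uIoc_of_ge, h] <;>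
    by_cases ha : l ≤ a <;> by_cases hb : l ≤ b <;>
      simp [indicator_apply, ha, hb] <;> linarith

theorem sq_ite_sqrt_le_sub_ite_sqrt_le {a b : ℝ} (ha : 0 ≤ a) (hb : 0 ≤ b) (l : ℝ) :
    ((if √l ≤ a then (1 : ℝ) else 0) - if √l ≤ b then 1 else 0) ^ 2
      = (Ι (a ^ 2) (b ^ 2)).indicator 1 l := by
  simp only [Real.sqrt_le_left ha, Real.sqrt_le_left hb, sq_ite_le_sub_ite_le_eq_indicator_uIoc]

theorem integrableOn_indicator_uIoc (a b : ℝ) (s : Set ℝ) :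
    IntegrableOn ((Ι a b).indicator (1 : ℝ → ℝ)) s :=
  ((integrable_indicator_iff measurableSet_uIoc).2
    (integrableOn_const measure_Ioc_lt_top.ne)).integrableOn

theorem setIntegral_Ioi_indicator_uIoc {a b c : ℝ} (ha : c ≤ a) (hb : c ≤ b) :
    ∫ l in Ioi c, (Ι a b).indicator 1 l = |b - a| := by
  have hsub : Ι a b ⊆ Ioi c := fun _ hx => (le_min ha hb).trans_lt hx.1
  rw [integral_indicator_one measurableSet_uIoc, measureReal_restrict_apply measurableSet_uIoc,
    inter_eq_left.mpr hsub, measureReal_def, Real.volume_uIoc,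
    ENNReal.toReal_ofReal (abs_nonneg _)]

theorem integral_hsNorm_specProj_sub_sq {n : ℕ} {A B : Matrix (Fin n) (Fin n) ℂ}
    (hA : A.PosSemidef) (hB : B.PosSemidef) :
    ∫ l in Ioi (0 : ℝ), hsNorm (specProj hA.1 √l - specProj hB.1 √l) ^ 2
      = ∑ i, ∑ j,
          jointWeight hA.1 hB.1 i j * |hB.1.eigenvalues j ^ 2 - hA.1.eigenvalues i ^ 2| := by
  have hint : ∀ i j, IntegrableOn (fun l => jointWeight hA.1 hB.1 i j *
      (Ι (hA.1.eigenvalues i ^ 2) (hB.1.eigenvalues j ^ 2)).indicator 1 l) (Ioi 0) :=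
    fun i j => (integrableOn_indicator_uIoc _ _ _).const_mul _
  simp only [hsNorm_specProj_sub_sq,
    sq_ite_sqrt_le_sub_ite_sqrt_le (hA.eigenvalues_nonneg _) (hB.eigenvalues_nonneg _)]
  rw [integral_finsetSum _ fun i _ => integrable_finsetSum _ fun j _ => hint i j]
  refine Finset.sum_congr rfl fun i _ => ?_
  rw [integral_finsetSum _ fun j _ => hint i j]
  refine Finset.sum_congr rfl fun j _ => ?_
  rw [integral_const_mul, setIntegral_Ioi_indicator_uIoc (sq_nonneg _) (sq_nonneg _)]

theorem Real.sum_mul_abs_mul_le_sqrt_mul_sqrt {ι : Type*} (s : Finset ι) {w : ι → ℝ}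
    (hw : ∀ i, 0 ≤ w i) (f g : ι → ℝ) :
    ∑ i ∈ s, w i * |f i * g i| ≤ √(∑ i ∈ s, w i * f i ^ 2) * √(∑ i ∈ s, w i * g i ^ 2) := by
  refine le_of_eq_of_le (Finset.sum_congr rfl fun i _ => ?_)
    (Real.sum_sqrt_mul_sqrt_le s (fun i => mul_nonneg (hw i) (sq_nonneg (f i)))
      (fun i => mul_nonneg (hw i) (sq_nonneg (g i))))
  rw [Real.sqrt_mul (hw i), Real.sqrt_mul (hw i), Real.sqrt_sq_eq_abs, Real.sqrt_sq_eq_abs,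
    abs_mul, mul_mul_mul_comm, Real.mul_self_sqrt (hw i)]

/-- Connes' joint distribution lemma, matrix case: for positive
semidefinite `ρ, σ`,
`∫₀^∞ ‖χ_{≥√λ}(ρ) − χ_{≥√λ}(σ)‖₂² dλ ≤ ‖ρ − σ‖₂ ‖ρ + σ‖₂`. -/
theorem connes_joint_distribution {n : ℕ} (ρ σ : Matrix (Fin n) (Fin n) ℂ)
    (hρ : ρ.PosSemidef) (hσ : σ.PosSemidef) :
    ∫ l in Set.Ioi (0 : ℝ),
        (hsNorm (specProj hρ.1 (Real.sqrt l) - specProj hσ.1 (Real.sqrt l))) ^ 2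
      ≤ hsNorm (ρ - σ) * hsNorm (ρ + σ) := by
  set a := hρ.1.eigenvalues
  set b := hσ.1.eigenvalues
  set μ := jointWeight hρ.1 hσ.1
  have hμ : ∀ p : Fin n × Fin n, 0 ≤ μ p.1 p.2 := fun p => jointWeight_nonneg _ _ _ _
  rw [integral_hsNorm_specProj_sub_sq hρ hσ, hsNorm_sub_eq_sqrt_jointWeight hρ.1 hσ.1,
    hsNorm_add_eq_sqrt_jointWeight hρ.1 hσ.1]
  calc ∑ i, ∑ j, μ i j * |b j ^ 2 - a i ^ 2|
      = ∑ p : Fin n × Fin n, μ p.1 p.2 * |(a p.1 - b p.2) * (a p.1 + b p.2)| := by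
        rw [Fintype.sum_prod_type]
        refine Finset.sum_congr rfl fun i _ => Finset.sum_congr rfl fun j _ => ?_
        rw [abs_sub_comm, sq_sub_sq, mul_comm (a i + b j)]
    _ ≤ √(∑ p : Fin n × Fin n, μ p.1 p.2 * (a p.1 - b p.2) ^ 2) *
          √(∑ p : Fin n × Fin n, μ p.1 p.2 * (a p.1 + b p.2) ^ 2) :=
        Real.sum_mul_abs_mul_le_sqrt_mul_sqrt _ hμ _ _
    _ = √(∑ i, ∑ j, μ i j * (a i - b j) ^ 2) * √(∑ i, ∑ j, μ i j * (a i + b j) ^ 2) := by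
        rw [Fintype.sum_prod_type, Fintype.sum_prod_type]
end

section
/- (Finite-dimensional version of Lemma 3.3) Let μ be a probability distribution on X, let σ ∈ M_n(ℂ) with normalized trace τ satisfying τ(σ*σ) = 1, and for each x ∈ X let {A_a^x}_{a∈𝒜}, {B_a^x}_{a∈𝒜}, {C_a^x}_{a∈𝒜} be POVMs in M_n(ℂ). Let |ψ⟩ = (σ⊗I)|τ⟩ with |τ⟩ maximally entangled. Suppose γ = E_{x∼μ} Σ_a ⟨ψ| (A_a^x − C_a^x)²⊗I |ψ⟩ and δ_A = 1 − E_{x∼μ} Σ_a ⟨ψ| A_a^x ⊗ (A_a^x)ᵀ |ψ⟩. Then for any distribution over pairs (x,y) whose marginal on x is μ, E_{(x,y)} Σ_{a,b} | ⟨ψ| A_a^x ⊗ (B_b^y)ᵀ |ψ⟩ − ⟨ψ| C_a^x ⊗ (B_b^y)ᵀ |ψ⟩ | ≤ 6(δ_A + √γ). -/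
open Matrix Kronecker ComplexOrder

/-- The maximally entangled unit vector `|τ⟩ = (1/√n) Σᵢ |i⟩⊗|i⟩` in `ℂⁿ⊗ℂⁿ`. -/
noncomputable def meVec (n : ℕ) : Fin n × Fin n → ℂ :=
  fun p => if p.1 = p.2 then ((1 / Real.sqrt n : ℝ) : ℂ) else 0

namespace MTCaux

open Finset

variable {d : Type*} [Fintype d]

/-- The real part of `⟨ψ, M ψ⟩`. -/
noncomputable def qE (ψ : d → ℂ) (M : Matrix d d ℂ) : ℝ := (star ψ ⬝ᵥ (M *ᵥ ψ)).re

lemma qE_nonneg {ψ : d → ℂ} {M : Matrix d d ℂ} (h : M.PosSemidef) : 0 ≤ qE ψ M := by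
  have h2 := h.dotProduct_mulVec_nonneg ψ
  rw [Complex.le_def] at h2
  simpa [qE] using h2.1

lemma qE_add (ψ : d → ℂ) (M N : Matrix d d ℂ) : qE ψ (M + N) = qE ψ M + qE ψ N := by
  simp [qE, Matrix.add_mulVec, dotProduct_add]

lemma qE_sub (ψ : d → ℂ) (M N : Matrix d d ℂ) : qE ψ (M - N) = qE ψ M - qE ψ N := by
  simp [qE, Matrix.sub_mulVec, dotProduct_sub]

lemma qE_zero (ψ : d → ℂ) : qE ψ (0 : Matrix d d ℂ) = 0 := by
  simp [qE]

lemma qE_sum (ψ : d → ℂ) {ι : Type*} (s : Finset ι) (M : ι → Matrix d d ℂ) :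
    qE ψ (∑ i ∈ s, M i) = ∑ i ∈ s, qE ψ (M i) := by
  classical
  induction s using Finset.induction_on with
  | empty => simp [qE_zero]
  | insert _ _ h ih => rw [Finset.sum_insert h, Finset.sum_insert h, qE_add, ih]

lemma qE_mono {ψ : d → ℂ} {M N : Matrix d d ℂ} (h : (N - M).PosSemidef) :
    qE ψ M ≤ qE ψ N := by
  have := qE_nonneg (ψ := ψ) h
  rw [qE_sub] at this; linarith

lemma abs_qE_le {ψ : d → ℂ} {M N : Matrix d d ℂ} (h1 : (N - M).PosSemidef)
    (h2 : (N + M).PosSemidef) : |qE ψ M| ≤ qE ψ N := by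
  have ha := qE_nonneg (ψ := ψ) h2
  rw [qE_add] at ha
  exact abs_le.2 ⟨by linarith, qE_mono h1⟩

lemma dot_shuffle (ψ : d → ℂ) (M N : Matrix d d ℂ) :
    star ψ ⬝ᵥ ((Mᴴ * N) *ᵥ ψ) = star (M *ᵥ ψ) ⬝ᵥ (N *ᵥ ψ) := by
  rw [← Matrix.mulVec_mulVec, Matrix.dotProduct_mulVec, ← Matrix.star_mulVec]

lemma dot_self_re_nonneg (u : d → ℂ) : 0 ≤ (star u ⬝ᵥ u).re := by
  rw [dotProduct, Complex.re_sum]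
  refine Finset.sum_nonneg fun i _ => ?_
  simp only [Pi.star_apply, Complex.star_def, ← Complex.normSq_eq_conj_mul_self,
    Complex.ofReal_re]
  exact Complex.normSq_nonneg _

lemma dot_conj_symm (u v : d → ℂ) : (star v ⬝ᵥ u) = starRingEnd ℂ (star u ⬝ᵥ v) := by
  simp [dotProduct, map_sum, mul_comm]

/-- Cauchy–Schwarz for the complex dot product. -/
lemma cs_re (u v : d → ℂ) :
    |(star u ⬝ᵥ v).re| ≤ Real.sqrt (star u ⬝ᵥ u).re * Real.sqrt (star v ⬝ᵥ v).re := by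
  have key : ∀ w : d → ℂ,
      Real.sqrt (star w ⬝ᵥ w).re = ‖(WithLp.equiv 2 (d → ℂ)).symm w‖ := by
    intro w
    have h2 : (inner ℂ ((WithLp.equiv 2 (d → ℂ)).symm w) ((WithLp.equiv 2 (d → ℂ)).symm w) : ℂ)
        = star w ⬝ᵥ w := (EuclideanSpace.inner_toLp_toLp w w).trans (dotProduct_comm _ _)
    have h := inner_self_eq_norm_sq (𝕜 := ℂ) ((WithLp.equiv 2 (d → ℂ)).symm w)
    have : (star w ⬝ᵥ w).re = ‖(WithLp.equiv 2 (d → ℂ)).symm w‖ ^ 2 := by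
      rw [← h2, ← h]; rfl
    rw [this, Real.sqrt_sq (norm_nonneg _)]
  have h3 : (inner ℂ ((WithLp.equiv 2 (d → ℂ)).symm u) ((WithLp.equiv 2 (d → ℂ)).symm v) : ℂ)
      = star u ⬝ᵥ v := (EuclideanSpace.inner_toLp_toLp u v).trans (dotProduct_comm _ _)
  calc |(star u ⬝ᵥ v).re|
      = |(inner ℂ ((WithLp.equiv 2 (d → ℂ)).symm u) ((WithLp.equiv 2 (d → ℂ)).symm v) : ℂ).re| := by
        rw [h3]
    _ ≤ ‖(inner ℂ ((WithLp.equiv 2 (d → ℂ)).symm u) ((WithLp.equiv 2 (d → ℂ)).symm v) : ℂ)‖ :=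
        Complex.abs_re_le_norm _
    _ ≤ ‖(WithLp.equiv 2 (d → ℂ)).symm u‖ * ‖(WithLp.equiv 2 (d → ℂ)).symm v‖ :=
        norm_inner_le_norm _ _
    _ = Real.sqrt (star u ⬝ᵥ u).re * Real.sqrt (star v ⬝ᵥ v).re := by rw [key u, key v]

/-- Cauchy–Schwarz for sums of square roots. -/
lemma sum_sqrt_mul_sqrt_le {ι : Type*} (s : Finset ι) (f g : ι → ℝ)
    (hf : ∀ i ∈ s, 0 ≤ f i) (hg : ∀ i ∈ s, 0 ≤ g i) :
    ∑ i ∈ s, Real.sqrt (f i) * Real.sqrt (g i)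
      ≤ Real.sqrt (∑ i ∈ s, f i) * Real.sqrt (∑ i ∈ s, g i) := by
  have h := Finset.sum_sq_le_sum_mul_sum_of_sq_eq_mul s (r := fun i => Real.sqrt (f i) * Real.sqrt (g i))
    (f := f) (g := g) hf hg (fun i hi => by
      rw [mul_pow, Real.sq_sqrt (hf i hi), Real.sq_sqrt (hg i hi)])
  have hnn : 0 ≤ ∑ i ∈ s, Real.sqrt (f i) * Real.sqrt (g i) :=
    Finset.sum_nonneg fun i _ => mul_nonneg (Real.sqrt_nonneg _) (Real.sqrt_nonneg _)
  calc ∑ i ∈ s, Real.sqrt (f i) * Real.sqrt (g i)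
      = Real.sqrt ((∑ i ∈ s, Real.sqrt (f i) * Real.sqrt (g i)) ^ 2) :=
        (Real.sqrt_sq hnn).symm
    _ ≤ Real.sqrt ((∑ i ∈ s, f i) * ∑ i ∈ s, g i) := Real.sqrt_le_sqrt h
    _ = Real.sqrt (∑ i ∈ s, f i) * Real.sqrt (∑ i ∈ s, g i) :=
        Real.sqrt_mul (Finset.sum_nonneg hf) _

/-- Cauchy–Schwarz for sums of inner products. -/
lemma sum_cs {ι : Type*} (s : Finset ι) (u v : ι → d → ℂ) :
    |∑ a ∈ s, (star (u a) ⬝ᵥ v a).re|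
      ≤ Real.sqrt (∑ a ∈ s, (star (u a) ⬝ᵥ u a).re)
        * Real.sqrt (∑ a ∈ s, (star (v a) ⬝ᵥ v a).re) := by
  refine le_trans (Finset.abs_sum_le_sum_abs _ _) ?_
  refine le_trans (Finset.sum_le_sum fun a _ => cs_re (u a) (v a)) ?_
  exact sum_sqrt_mul_sqrt_le s _ _ (fun a _ => dot_self_re_nonneg _)
    (fun a _ => dot_self_re_nonneg _)

lemma qE_pair (ψ : d → ℂ) {M N K : Matrix d d ℂ} (h : Mᴴ * N = K) :
    qE ψ K = (star (M *ᵥ ψ) ⬝ᵥ (N *ᵥ ψ)).re := by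
  rw [← h, qE, dot_shuffle]

section Kron

variable {α β : Type*} [Fintype α] [Fintype β] [DecidableEq α] [DecidableEq β]

lemma kron_conjT (P : Matrix α α ℂ) (Q : Matrix β β ℂ) : (P ⊗ₖ Q)ᴴ = Pᴴ ⊗ₖ Qᴴ := by
  ext ⟨i, j⟩ ⟨k, l⟩
  simp [Matrix.conjTranspose_apply, Matrix.kroneckerMap_apply, star_mul']

lemma transpose_conjT (P : Matrix α α ℂ) : (Pᵀ)ᴴ = (Pᴴ)ᵀ := by
  ext i j
  simp [Matrix.conjTranspose_apply, Matrix.transpose_apply]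

lemma kron_psd {P : Matrix α α ℂ} {Q : Matrix β β ℂ} (hP : P.PosSemidef)
    (hQ : Q.PosSemidef) : (P ⊗ₖ Q).PosSemidef := by
  exact hP.kronecker hQ

lemma sum_kron {ι : Type*} (s : Finset ι) (M : ι → Matrix α α ℂ) (Q : Matrix β β ℂ) :
    (∑ i ∈ s, M i) ⊗ₖ Q = ∑ i ∈ s, (M i ⊗ₖ Q) := by
  ext ⟨i, j⟩ ⟨k, l⟩
  simp [Matrix.kroneckerMap_apply, Matrix.sum_apply, Finset.sum_mul]

lemma kron_sum {ι : Type*} (s : Finset ι) (P : Matrix α α ℂ) (M : ι → Matrix β β ℂ) :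
    P ⊗ₖ (∑ i ∈ s, M i) = ∑ i ∈ s, (P ⊗ₖ M i) := by
  ext ⟨i, j⟩ ⟨k, l⟩
  simp [Matrix.kroneckerMap_apply, Matrix.sum_apply, Finset.mul_sum]

lemma sub_kron (P P' : Matrix α α ℂ) (Q : Matrix β β ℂ) :
    (P - P') ⊗ₖ Q = P ⊗ₖ Q - P' ⊗ₖ Q := by
  ext ⟨i, j⟩ ⟨k, l⟩
  simp [Matrix.kroneckerMap_apply, sub_mul]

lemma kron_sub (P : Matrix α α ℂ) (Q Q' : Matrix β β ℂ) :
    P ⊗ₖ (Q - Q') = P ⊗ₖ Q - P ⊗ₖ Q' := by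
  ext ⟨i, j⟩ ⟨k, l⟩
  simp [Matrix.kroneckerMap_apply, mul_sub]

end Kron

section PSDfacts

variable {I : Type*} [Fintype I] [DecidableEq I]

lemma psd_sum {ι : Type*} (s : Finset ι) (M : ι → Matrix I I ℂ)
    (h : ∀ i ∈ s, (M i).PosSemidef) : (∑ i ∈ s, M i).PosSemidef := by
  classical
  induction s using Finset.induction_on with
  | empty => simpa using Matrix.PosSemidef.zero
  | @insert a s ha ih =>
      rw [Finset.sum_insert ha]
      exact (h a (Finset.mem_insert_self a s)).add
        (ih fun i hi => h i (Finset.mem_insert_of_mem hi))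

lemma povm_compl {𝒜 : Type*} [Fintype 𝒜] {M : 𝒜 → Matrix I I ℂ}
    (h : ∀ a, (M a).PosSemidef) (hsum : ∑ a, M a = 1) (a : 𝒜) :
    ((1 : Matrix I I ℂ) - M a).PosSemidef := by
  classical
  have key : (1 : Matrix I I ℂ) - M a = ∑ a' ∈ Finset.univ.erase a, M a' := by
    rw [← hsum, ← Finset.sum_erase_add Finset.univ M (Finset.mem_univ a)]
    abel
  rw [key]
  exact psd_sum _ _ fun i _ => h i

lemma psd_sub_sq {M : Matrix I I ℂ} (hM : M.PosSemidef)
    (h1 : ((1 : Matrix I I ℂ) - M).PosSemidef) : (M - M * M).PosSemidef := by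
  obtain ⟨s, hsH, hss, hpsd⟩ : ∃ s : Matrix I I ℂ, sᴴ = s ∧ s * s = M ∧
      (s * ((1 : Matrix I I ℂ) - M) * sᴴ).PosSemidef :=
    by open scoped MatrixOrder in exact ⟨CFC.sqrt M, (CFC.sqrt_nonneg M).posSemidef.1,
      CFC.sqrt_mul_sqrt_self M hM.nonneg, h1.mul_mul_conjTranspose_same _⟩
  have key : s * ((1 : Matrix I I ℂ) - M) * sᴴ = M - M * M := by
    rw [hsH, ← hss]
    noncomm_ring
  rwa [key] at hpsd

end PSDfacts

section Main

variable {I 𝒜 : Type*} [Fintype I] [DecidableEq I] [Fintype 𝒜]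

variable (ψ : I × I → ℂ)

/-- `∑_a ⟨A_a ⊗ A_aᵀ⟩ ≤ 1` for a POVM `A`. -/
lemma sAA_le_one (hψ : star ψ ⬝ᵥ ψ = 1) (A : 𝒜 → Matrix I I ℂ)
    (hA : ∀ a, (A a).PosSemidef) (hAsum : ∑ a, A a = 1) :
    ∑ a, qE ψ (A a ⊗ₖ (A a)ᵀ) ≤ 1 := by
  have hterm : ∀ a a' : 𝒜, 0 ≤ qE ψ (A a ⊗ₖ (A a')ᵀ) := fun a a' =>
    qE_nonneg (kron_psd (hA a) ((hA a').transpose))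
  have hfull : ∑ a, ∑ a', qE ψ (A a ⊗ₖ (A a')ᵀ) = 1 := by
    have : ∀ a : 𝒜, ∑ a', qE ψ (A a ⊗ₖ (A a')ᵀ) = qE ψ (A a ⊗ₖ (1 : Matrix I I ℂ)) := by
      intro a
      rw [← qE_sum, ← kron_sum]
      congr 1
      rw [← Matrix.transpose_sum, hAsum, Matrix.transpose_one]
    rw [Finset.sum_congr rfl fun a _ => this a, ← qE_sum, ← sum_kron, hAsum,
      Matrix.one_kronecker_one]
    simp [qE, Matrix.one_mulVec, hψ]
  calc ∑ a, qE ψ (A a ⊗ₖ (A a)ᵀ)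
      ≤ ∑ a, ∑ a', qE ψ (A a ⊗ₖ (A a')ᵀ) := by
        refine Finset.sum_le_sum fun a _ => ?_
        exact Finset.single_le_sum (fun a' _ => hterm a a') (Finset.mem_univ a)
    _ = 1 := hfull

/-- The per-question-pair core estimate. -/
lemma per_pair (hψ : star ψ ⬝ᵥ ψ = 1)
    (A B C : 𝒜 → Matrix I I ℂ)
    (hA : ∀ a, (A a).PosSemidef) (hAsum : ∑ a, A a = 1)
    (hB : ∀ a, (B a).PosSemidef) (hBsum : ∑ a, B a = 1)
    (hC : ∀ a, (C a).PosSemidef) (hCsum : ∑ a, C a = 1) :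
    ∑ a, ∑ b, |qE ψ (A a ⊗ₖ (B b)ᵀ) - qE ψ (C a ⊗ₖ (B b)ᵀ)|
      ≤ 4 * (1 - ∑ a, qE ψ (A a ⊗ₖ (A a)ᵀ))
        + 4 * Real.sqrt (∑ a, qE ψ (((A a - C a) * (A a - C a)) ⊗ₖ (1 : Matrix I I ℂ))) := by
  classical
  set D : 𝒜 → Matrix I I ℂ := fun a => A a - C a with hD
  set t : 𝒜 → 𝒜 → ℝ := fun a b => qE ψ (D a ⊗ₖ (B b)ᵀ) with ht
  set S : 𝒜 → Matrix I I ℂ := fun a => ∑ b, if 0 ≤ t a b then B b else 0 with hS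
  set S' : 𝒜 → Matrix I I ℂ := fun a => ∑ b, if 0 ≤ t a b then 0 else B b with hS'
  set F : 𝒜 → Matrix I I ℂ := fun a => S a + S a - 1 with hF
  have psd1 : (1 : Matrix I I ℂ).PosSemidef := Matrix.PosSemidef.one
  -- hermiticity
  have hAH : ∀ a, (A a)ᴴ = A a := fun a => (hA a).1
  have hCH : ∀ a, (C a)ᴴ = C a := fun a => (hC a).1
  have hDH : ∀ a, (D a)ᴴ = D a := fun a => by
    simp only [hD]; rw [Matrix.conjTranspose_sub, hAH, hCH]
  -- PSD facts on S, F
  have hSpsd : ∀ a, (S a).PosSemidef := fun a => by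
    refine psd_sum _ _ fun b _ => ?_
    split_ifs
    · exact hB b
    · exact Matrix.PosSemidef.zero
  have hS'psd : ∀ a, (S' a).PosSemidef := fun a => by
    refine psd_sum _ _ fun b _ => ?_
    split_ifs
    · exact Matrix.PosSemidef.zero
    · exact hB b
  have hSS' : ∀ a, S a + S' a = 1 := fun a => by
    simp only [hS, hS', ← Finset.sum_add_distrib]
    rw [← hBsum]
    refine Finset.sum_congr rfl fun b _ => ?_
    split_ifs <;> simp
  have h1S : ∀ a, (1 : Matrix I I ℂ) - S a = S' a := fun a => by
    rw [← hSS' a]; abel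
  have hSsubsq : ∀ a, (S a - S a * S a).PosSemidef := fun a =>
    psd_sub_sq (hSpsd a) (by rw [h1S a]; exact hS'psd a)
  have hF1 : ∀ a, ((1 : Matrix I I ℂ) - F a).PosSemidef := fun a => by
    have e : (1 : Matrix I I ℂ) - F a = ((1 : Matrix I I ℂ) - S a) + ((1 : Matrix I I ℂ) - S a) := by
      simp only [hF]; abel
    rw [e, h1S a]
    exact (hS'psd a).add (hS'psd a)
  have hF2 : ∀ a, ((1 : Matrix I I ℂ) + F a).PosSemidef := fun a => by
    have e : (1 : Matrix I I ℂ) + F a = S a + S a := by simp only [hF]; abel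
    rw [e]
    exact (hSpsd a).add (hSpsd a)
  have hFsq : ∀ a, ((1 : Matrix I I ℂ) - F a * F a).PosSemidef := fun a => by
    have e : (1 : Matrix I I ℂ) - F a * F a
        = ((S a - S a * S a) + (S a - S a * S a)) + ((S a - S a * S a) + (S a - S a * S a)) := by
      simp only [hF]; noncomm_ring
    rw [e]
    exact (((hSsubsq a).add (hSsubsq a)).add ((hSsubsq a).add (hSsubsq a)))
  have hFH : ∀ a, (F a)ᴴ = F a := fun a => by
    simp only [hF]
    rw [Matrix.conjTranspose_sub, Matrix.conjTranspose_add, Matrix.conjTranspose_one,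
      (hSpsd a).1.eq]
  have hFTH : ∀ a, ((F a)ᵀ)ᴴ = (F a)ᵀ := fun a => by
    rw [transpose_conjT, hFH]
  -- transpose PSD facts
  have hFT1 : ∀ a, ((1 : Matrix I I ℂ) - (F a)ᵀ).PosSemidef := fun a => by
    have e : (1 : Matrix I I ℂ) - (F a)ᵀ = ((1 : Matrix I I ℂ) - F a)ᵀ := by
      conv_rhs => rw [Matrix.transpose_sub, Matrix.transpose_one]
    rw [e]; exact (hF1 a).transpose
  have hFT2 : ∀ a, ((1 : Matrix I I ℂ) + (F a)ᵀ).PosSemidef := fun a => by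
    have e : (1 : Matrix I I ℂ) + (F a)ᵀ = ((1 : Matrix I I ℂ) + F a)ᵀ := by
      conv_rhs => rw [Matrix.transpose_add, Matrix.transpose_one]
    rw [e]; exact (hF2 a).transpose
  have hFTsq : ∀ a, ((1 : Matrix I I ℂ) - (F a)ᵀ * (F a)ᵀ).PosSemidef := fun a => by
    have e : (1 : Matrix I I ℂ) - (F a)ᵀ * (F a)ᵀ = ((1 : Matrix I I ℂ) - F a * F a)ᵀ := by
      conv_rhs => rw [Matrix.transpose_sub, Matrix.transpose_one, Matrix.transpose_mul]
    rw [e]; exact (hFsq a).transpose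
  -- squares are PSD
  have hAA : ∀ a, (A a * A a).PosSemidef := fun a => by
    have := Matrix.posSemidef_conjTranspose_mul_self (A a)
    rwa [hAH a] at this
  have hCC : ∀ a, (C a * C a).PosSemidef := fun a => by
    have := Matrix.posSemidef_conjTranspose_mul_self (C a)
    rwa [hCH a] at this
  have hAsub : ∀ a, (A a - A a * A a).PosSemidef := fun a =>
    psd_sub_sq (hA a) (povm_compl hA hAsum a)
  have hCsub : ∀ a, (C a - C a * C a).PosSemidef := fun a =>
    psd_sub_sq (hC a) (povm_compl hC hCsum a)
  -- scalar abbreviations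
  set pA : 𝒜 → ℝ := fun a => qE ψ ((A a * A a) ⊗ₖ (1 : Matrix I I ℂ)) with hpA
  set pC : 𝒜 → ℝ := fun a => qE ψ ((C a * C a) ⊗ₖ (1 : Matrix I I ℂ)) with hpC
  set pD : 𝒜 → ℝ := fun a => qE ψ ((D a * D a) ⊗ₖ (1 : Matrix I I ℂ)) with hpD
  set sA1 : 𝒜 → ℝ := fun a => qE ψ (A a ⊗ₖ (1 : Matrix I I ℂ)) with hsA1
  set sC1 : 𝒜 → ℝ := fun a => qE ψ (C a ⊗ₖ (1 : Matrix I I ℂ)) with hsC1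
  have hpA0 : ∀ a, 0 ≤ pA a := fun a => qE_nonneg (kron_psd (hAA a) psd1)
  have hpC0 : ∀ a, 0 ≤ pC a := fun a => qE_nonneg (kron_psd (hCC a) psd1)
  have hpD0 : ∀ a, 0 ≤ pD a := fun a => by
    refine qE_nonneg (kron_psd ?_ psd1)
    have := Matrix.posSemidef_conjTranspose_mul_self (D a)
    rwa [hDH a] at this
  -- total masses
  have hsum1 : qE ψ ((1 : Matrix (I × I) (I × I) ℂ)) = 1 := by
    simp [qE, Matrix.one_mulVec, hψ]
  have hsumA1 : ∑ a, sA1 a = 1 := by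
    simp only [hsA1]
    rw [← qE_sum, ← sum_kron, hAsum, Matrix.one_kronecker_one, hsum1]
  have hsumC1 : ∑ a, sC1 a = 1 := by
    simp only [hsC1]
    rw [← qE_sum, ← sum_kron, hCsum, Matrix.one_kronecker_one, hsum1]
  -- bounds on sums of squares
  have hpAle : ∀ a, pA a ≤ sA1 a := fun a => by
    refine qE_mono ?_
    rw [← sub_kron]
    exact kron_psd (hAsub a) psd1
  have hpCle : ∀ a, pC a ≤ sC1 a := fun a => by
    refine qE_mono ?_
    rw [← sub_kron]
    exact kron_psd (hCsub a) psd1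
  have hsumpA : ∑ a, pA a ≤ 1 := by
    rw [← hsumA1]; exact Finset.sum_le_sum fun a _ => hpAle a
  have hsumpC : ∑ a, pC a ≤ 1 := by
    rw [← hsumC1]; exact Finset.sum_le_sum fun a _ => hpCle a
  -- step (f1) : rewrite the goal summands as |t a b|
  have f1 : ∀ a b, |qE ψ (A a ⊗ₖ (B b)ᵀ) - qE ψ (C a ⊗ₖ (B b)ᵀ)| = |t a b| := by
    intro a b
    have : t a b = qE ψ (A a ⊗ₖ (B b)ᵀ) - qE ψ (C a ⊗ₖ (B b)ᵀ) := by
      simp only [ht, hD, sub_kron, qE_sub]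
    rw [this]
  -- step (f8) : ∑_b |t a b| = qE (D a ⊗ (F a)ᵀ)
  have f8 : ∀ a, ∑ b, |t a b| = qE ψ (D a ⊗ₖ (F a)ᵀ) := by
    intro a
    have hFt : (F a)ᵀ = (S a)ᵀ + (S a)ᵀ - 1 := by
      simp only [hF]
      rw [Matrix.transpose_sub, Matrix.transpose_add, Matrix.transpose_one]
    have hDS : qE ψ (D a ⊗ₖ (S a)ᵀ) = ∑ b, if 0 ≤ t a b then t a b else 0 := by
      have : (S a)ᵀ = ∑ b, (if 0 ≤ t a b then B b else 0)ᵀ := by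
        simp only [hS]; rw [Matrix.transpose_sum]
      rw [this, kron_sum, qE_sum]
      refine Finset.sum_congr rfl fun b _ => ?_
      split_ifs with h
      · rfl
      · rw [Matrix.transpose_zero, Matrix.kronecker_zero, qE_zero]
    have hD1 : qE ψ (D a ⊗ₖ (1 : Matrix I I ℂ)) = ∑ b, t a b := by
      have : (1 : Matrix I I ℂ) = ∑ b, (B b)ᵀ := by
        rw [← Matrix.transpose_sum, hBsum, Matrix.transpose_one]
      rw [this, kron_sum, qE_sum]
    have expand : qE ψ (D a ⊗ₖ (F a)ᵀ)
        = (∑ b, if 0 ≤ t a b then t a b else 0) + (∑ b, if 0 ≤ t a b then t a b else 0)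
          - ∑ b, t a b := by
      rw [hFt]
      have e : D a ⊗ₖ ((S a)ᵀ + (S a)ᵀ - 1)
          = D a ⊗ₖ (S a)ᵀ + D a ⊗ₖ (S a)ᵀ - D a ⊗ₖ (1 : Matrix I I ℂ) := by
        rw [kron_sub, Matrix.kronecker_add]
      rw [e, qE_sub, qE_add, hDS, hD1]
    rw [expand, ← Finset.sum_add_distrib, ← Finset.sum_sub_distrib]
    refine (Finset.sum_congr rfl fun b _ => ?_).symm
    split_ifs with h
    · rw [abs_of_nonneg h]; ring
    · rw [abs_of_neg (not_le.mp h)]; ring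
  -- step (f9) : decomposition of qE (D ⊗ Fᵀ)
  have f9 : ∀ a, qE ψ (D a ⊗ₖ (F a)ᵀ)
      = qE ψ ((D a * A a) ⊗ₖ (F a)ᵀ) + qE ψ ((A a - A a * A a) ⊗ₖ (F a)ᵀ)
        - qE ψ ((C a - C a * C a) ⊗ₖ (F a)ᵀ) + qE ψ ((C a * D a) ⊗ₖ (F a)ᵀ) := by
    intro a
    have hmat : D a = (((D a * A a) + (A a - A a * A a)) - (C a - C a * C a)) + (C a * D a) := by
      simp only [hD]; noncomm_ring
    calc qE ψ (D a ⊗ₖ (F a)ᵀ)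
        = qE ψ (((((D a * A a) + (A a - A a * A a)) - (C a - C a * C a)) + (C a * D a))
            ⊗ₖ (F a)ᵀ) := by rw [← hmat]
      _ = _ := by
          rw [Matrix.add_kronecker, sub_kron, Matrix.add_kronecker, qE_add, qE_sub, qE_add]
  -- vectors
  set uA : 𝒜 → I × I → ℂ := fun a => (A a ⊗ₖ (1 : Matrix I I ℂ)) *ᵥ ψ with huA
  set uD : 𝒜 → I × I → ℂ := fun a => (D a ⊗ₖ (1 : Matrix I I ℂ)) *ᵥ ψ with huD
  set vA : 𝒜 → I × I → ℂ := fun a => (A a ⊗ₖ (F a)ᵀ) *ᵥ ψ with hvA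
  set wC : 𝒜 → I × I → ℂ := fun a => (C a ⊗ₖ (F a)ᵀ) *ᵥ ψ with hwC
  set zA : 𝒜 → I × I → ℂ := fun a => ((1 : Matrix I I ℂ) ⊗ₖ (A a)ᵀ) *ᵥ ψ with hzA
  -- norm identities
  have nuA : ∀ a, (star (uA a) ⬝ᵥ uA a).re = pA a := fun a => by
    refine (qE_pair ψ ?_).symm
    rw [kron_conjT, Matrix.conjTranspose_one, hAH, ← Matrix.mul_kronecker_mul, Matrix.one_mul]
  have nuD : ∀ a, (star (uD a) ⬝ᵥ uD a).re = pD a := fun a => by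
    refine (qE_pair ψ ?_).symm
    rw [kron_conjT, Matrix.conjTranspose_one, hDH, ← Matrix.mul_kronecker_mul, Matrix.one_mul]
  have nvA : ∀ a, (star (vA a) ⬝ᵥ vA a).re
      = qE ψ ((A a * A a) ⊗ₖ ((F a)ᵀ * (F a)ᵀ)) := fun a => by
    refine (qE_pair ψ ?_).symm
    rw [kron_conjT, hFTH, hAH, ← Matrix.mul_kronecker_mul]
  have nwC : ∀ a, (star (wC a) ⬝ᵥ wC a).re
      = qE ψ ((C a * C a) ⊗ₖ ((F a)ᵀ * (F a)ᵀ)) := fun a => by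
    refine (qE_pair ψ ?_).symm
    rw [kron_conjT, hFTH, hCH, ← Matrix.mul_kronecker_mul]
  have nzA : ∀ a, (star (zA a) ⬝ᵥ zA a).re
      = qE ψ ((1 : Matrix I I ℂ) ⊗ₖ ((A a * A a)ᵀ)) := fun a => by
    refine (qE_pair ψ ?_).symm
    rw [kron_conjT, Matrix.conjTranspose_one, transpose_conjT, hAH,
      ← Matrix.mul_kronecker_mul, Matrix.one_mul, ← Matrix.transpose_mul]
  -- bounds for ∑ ‖vA‖², ∑ ‖wC‖²
  have hvAle : ∀ a, (star (vA a) ⬝ᵥ vA a).re ≤ sA1 a := fun a => by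
    rw [nvA a]
    refine le_trans (qE_mono ?_) (hpAle a)
    rw [← kron_sub]
    exact kron_psd (hAA a) (hFTsq a)
  have hwCle : ∀ a, (star (wC a) ⬝ᵥ wC a).re ≤ sC1 a := fun a => by
    rw [nwC a]
    refine le_trans (qE_mono ?_) (hpCle a)
    rw [← kron_sub]
    exact kron_psd (hCC a) (hFTsq a)
  have hgs : 0 ≤ ∑ a, pD a := Finset.sum_nonneg fun a _ => hpD0 a
  -- T1 bound
  have hT1 : |∑ a, qE ψ ((D a * A a) ⊗ₖ (F a)ᵀ)| ≤ Real.sqrt (∑ a, pD a) := by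
    have e : ∀ a, qE ψ ((D a * A a) ⊗ₖ (F a)ᵀ) = (star (uD a) ⬝ᵥ vA a).re := fun a => by
      refine qE_pair ψ ?_
      rw [kron_conjT, Matrix.conjTranspose_one, hDH, ← Matrix.mul_kronecker_mul, Matrix.one_mul]
    rw [Finset.sum_congr rfl fun a _ => e a]
    refine le_trans (sum_cs _ _ _) ?_
    rw [Finset.sum_congr rfl fun a (_ : a ∈ Finset.univ) => nuD a]
    have h2 : Real.sqrt (∑ a, (star (vA a) ⬝ᵥ vA a).re) ≤ 1 := by
      rw [show (1:ℝ) = Real.sqrt 1 from (Real.sqrt_one).symm]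
      refine Real.sqrt_le_sqrt ?_
      rw [← hsumA1]
      exact Finset.sum_le_sum fun a _ => hvAle a
    calc Real.sqrt (∑ a, pD a) * Real.sqrt (∑ a, (star (vA a) ⬝ᵥ vA a).re)
        ≤ Real.sqrt (∑ a, pD a) * 1 := by
          exact mul_le_mul_of_nonneg_left h2 (Real.sqrt_nonneg _)
      _ = Real.sqrt (∑ a, pD a) := mul_one _
  -- T4 bound
  have hT4 : |∑ a, qE ψ ((C a * D a) ⊗ₖ (F a)ᵀ)| ≤ Real.sqrt (∑ a, pD a) := by
    have e : ∀ a, qE ψ ((C a * D a) ⊗ₖ (F a)ᵀ) = (star (wC a) ⬝ᵥ uD a).re := fun a => by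
      refine qE_pair ψ ?_
      rw [kron_conjT, hFTH, hCH, ← Matrix.mul_kronecker_mul, Matrix.mul_one]
    rw [Finset.sum_congr rfl fun a _ => e a]
    refine le_trans (sum_cs _ _ _) ?_
    rw [Finset.sum_congr rfl fun a (_ : a ∈ Finset.univ) => nuD a]
    have h2 : Real.sqrt (∑ a, (star (wC a) ⬝ᵥ wC a).re) ≤ 1 := by
      rw [show (1:ℝ) = Real.sqrt 1 from (Real.sqrt_one).symm]
      refine Real.sqrt_le_sqrt ?_
      rw [← hsumC1]
      exact Finset.sum_le_sum fun a _ => hwCle a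
    calc Real.sqrt (∑ a, (star (wC a) ⬝ᵥ wC a).re) * Real.sqrt (∑ a, pD a)
        ≤ 1 * Real.sqrt (∑ a, pD a) := by
          exact mul_le_mul_of_nonneg_right h2 (Real.sqrt_nonneg _)
      _ = Real.sqrt (∑ a, pD a) := one_mul _
  -- T2 bound
  have hT2 : |∑ a, qE ψ ((A a - A a * A a) ⊗ₖ (F a)ᵀ)| ≤ 1 - ∑ a, pA a := by
    refine le_trans (Finset.abs_sum_le_sum_abs _ _) ?_
    have e : ∀ a, |qE ψ ((A a - A a * A a) ⊗ₖ (F a)ᵀ)|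
        ≤ qE ψ ((A a - A a * A a) ⊗ₖ (1 : Matrix I I ℂ)) := fun a => by
      refine abs_qE_le ?_ ?_
      · rw [← kron_sub]
        exact kron_psd (hAsub a) (hFT1 a)
      · rw [← Matrix.kronecker_add]
        exact kron_psd (hAsub a) (hFT2 a)
    refine le_trans (Finset.sum_le_sum fun a _ => e a) ?_
    have e2 : ∀ a, qE ψ ((A a - A a * A a) ⊗ₖ (1 : Matrix I I ℂ)) = sA1 a - pA a := fun a => by
      rw [sub_kron, qE_sub]
    rw [Finset.sum_congr rfl fun a (_ : a ∈ Finset.univ) => e2 a, Finset.sum_sub_distrib, hsumA1]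
  have hT3 : |∑ a, qE ψ ((C a - C a * C a) ⊗ₖ (F a)ᵀ)| ≤ 1 - ∑ a, pC a := by
    refine le_trans (Finset.abs_sum_le_sum_abs _ _) ?_
    have e : ∀ a, |qE ψ ((C a - C a * C a) ⊗ₖ (F a)ᵀ)|
        ≤ qE ψ ((C a - C a * C a) ⊗ₖ (1 : Matrix I I ℂ)) := fun a => by
      refine abs_qE_le ?_ ?_
      · rw [← kron_sub]
        exact kron_psd (hCsub a) (hFT1 a)
      · rw [← Matrix.kronecker_add]
        exact kron_psd (hCsub a) (hFT2 a)
    refine le_trans (Finset.sum_le_sum fun a _ => e a) ?_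
    have e2 : ∀ a, qE ψ ((C a - C a * C a) ⊗ₖ (1 : Matrix I I ℂ)) = sC1 a - pC a := fun a => by
      rw [sub_kron, qE_sub]
    rw [Finset.sum_congr rfl fun a (_ : a ∈ Finset.univ) => e2 a, Finset.sum_sub_distrib, hsumC1]
  -- lower bound on ∑ pA  via self-consistency
  have hqA : ∀ a, qE ψ ((1 : Matrix I I ℂ) ⊗ₖ ((A a * A a)ᵀ))
      ≤ qE ψ ((1 : Matrix I I ℂ) ⊗ₖ (A a)ᵀ) := fun a => by
    refine qE_mono ?_
    rw [← kron_sub]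
    have e : (A a)ᵀ - (A a * A a)ᵀ = (A a - A a * A a)ᵀ := by
      conv_rhs => rw [Matrix.transpose_sub]
    rw [e]
    exact kron_psd psd1 (hAsub a).transpose
  have hsumzA : ∑ a, qE ψ ((1 : Matrix I I ℂ) ⊗ₖ (A a)ᵀ) = 1 := by
    rw [← qE_sum, ← kron_sum, ← Matrix.transpose_sum, hAsum, Matrix.transpose_one,
      Matrix.one_kronecker_one, hsum1]
  have hAAT : ∀ a, qE ψ (A a ⊗ₖ (A a)ᵀ)
      ≤ (pA a + qE ψ ((1 : Matrix I I ℂ) ⊗ₖ ((A a * A a)ᵀ))) / 2 := fun a => by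
    have e : qE ψ (A a ⊗ₖ (A a)ᵀ) = (star (uA a) ⬝ᵥ zA a).re := by
      refine qE_pair ψ ?_
      rw [kron_conjT, Matrix.conjTranspose_one, hAH, ← Matrix.mul_kronecker_mul,
        Matrix.mul_one, Matrix.one_mul]
    have hcs := cs_re (uA a) (zA a)
    rw [nuA a, nzA a] at hcs
    have h2 := two_mul_le_add_sq (Real.sqrt (pA a))
      (Real.sqrt (qE ψ ((1 : Matrix I I ℂ) ⊗ₖ ((A a * A a)ᵀ))))
    rw [Real.sq_sqrt (hpA0 a), Real.sq_sqrt (qE_nonneg (kron_psd psd1 (hAA a).transpose))] at h2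
    have := le_trans (le_abs_self _) hcs
    rw [e]
    nlinarith [this, h2]
  have hsAAle : ∑ a, qE ψ (A a ⊗ₖ (A a)ᵀ) ≤ ((∑ a, pA a) + 1) / 2 := by
    refine le_trans (Finset.sum_le_sum fun a _ => hAAT a) ?_
    have : ∑ a, qE ψ ((1 : Matrix I I ℂ) ⊗ₖ ((A a * A a)ᵀ)) ≤ 1 := by
      rw [← hsumzA]
      exact Finset.sum_le_sum fun a _ => hqA a
    rw [← Finset.sum_div, Finset.sum_add_distrib]
    have h := Finset.sum_le_sum (s := (Finset.univ : Finset 𝒜)) fun a (_ : a ∈ Finset.univ) =>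
      le_refl (pA a)
    linarith [this]
  -- lower bound on ∑ pC
  have hpClower : ∑ a, pA a - 2 * Real.sqrt (∑ a, pD a) ≤ ∑ a, pC a := by
    have per : ∀ a, pA a - 2 * (Real.sqrt (pA a) * Real.sqrt (pD a)) ≤ pC a := fun a => by
      have huCA : (C a ⊗ₖ (1 : Matrix I I ℂ)) *ᵥ ψ = uA a - uD a := by
        have e : C a = A a - D a := by simp only [hD]; abel
        rw [e, sub_kron, Matrix.sub_mulVec]
      have npc : pC a = (star (uA a - uD a) ⬝ᵥ (uA a - uD a)).re := by
        rw [← huCA]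
        refine qE_pair ψ ?_
        rw [kron_conjT, Matrix.conjTranspose_one, hCH, ← Matrix.mul_kronecker_mul, Matrix.one_mul]
      have expand : (star (uA a - uD a) ⬝ᵥ (uA a - uD a)).re
          = pA a - 2 * (star (uA a) ⬝ᵥ uD a).re + pD a := by
        rw [star_sub, sub_dotProduct, dotProduct_sub, dotProduct_sub]
        have hsymm : (star (uD a) ⬝ᵥ uA a).re = (star (uA a) ⬝ᵥ uD a).re := by
          rw [dot_conj_symm, Complex.conj_re]
        simp only [Complex.sub_re]
        rw [hsymm, nuA a, nuD a]
        ring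
      have hcs := cs_re (uA a) (uD a)
      rw [nuA a, nuD a] at hcs
      have habs := le_abs_self ((star (uA a) ⬝ᵥ uD a).re)
      rw [npc, expand]
      linarith [hpD0 a, hcs, habs]
    refine le_trans ?_ (Finset.sum_le_sum fun a _ => per a)
    rw [Finset.sum_sub_distrib]
    have hcs2 : ∑ a, Real.sqrt (pA a) * Real.sqrt (pD a)
        ≤ Real.sqrt (∑ a, pA a) * Real.sqrt (∑ a, pD a) :=
      sum_sqrt_mul_sqrt_le _ _ _ (fun a _ => hpA0 a) (fun a _ => hpD0 a)
    have hsq1 : Real.sqrt (∑ a, pA a) ≤ 1 := by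
      rw [show (1:ℝ) = Real.sqrt 1 from (Real.sqrt_one).symm]
      exact Real.sqrt_le_sqrt hsumpA
    have : Real.sqrt (∑ a, pA a) * Real.sqrt (∑ a, pD a) ≤ Real.sqrt (∑ a, pD a) := by
      calc Real.sqrt (∑ a, pA a) * Real.sqrt (∑ a, pD a)
          ≤ 1 * Real.sqrt (∑ a, pD a) :=
            mul_le_mul_of_nonneg_right hsq1 (Real.sqrt_nonneg _)
        _ = Real.sqrt (∑ a, pD a) := one_mul _
    rw [← Finset.mul_sum]
    nlinarith [hcs2, this]
  -- assemble
  have main : ∑ a, ∑ b, |t a b|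
      ≤ 4 * (1 - ∑ a, qE ψ (A a ⊗ₖ (A a)ᵀ)) + 4 * Real.sqrt (∑ a, pD a) := by
    rw [Finset.sum_congr rfl fun a (_ : a ∈ Finset.univ) => f8 a]
    rw [Finset.sum_congr rfl fun a (_ : a ∈ Finset.univ) => f9 a]
    rw [Finset.sum_add_distrib, Finset.sum_sub_distrib, Finset.sum_add_distrib]
    have l1 := le_abs_self (∑ a, qE ψ ((D a * A a) ⊗ₖ (F a)ᵀ))
    have l2 := le_abs_self (∑ a, qE ψ ((A a - A a * A a) ⊗ₖ (F a)ᵀ))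
    have l3 := neg_abs_le (∑ a, qE ψ ((C a - C a * C a) ⊗ₖ (F a)ᵀ))
    have l4 := le_abs_self (∑ a, qE ψ ((C a * D a) ⊗ₖ (F a)ᵀ))
    have sq0 : 0 ≤ Real.sqrt (∑ a, pD a) := Real.sqrt_nonneg _
    linarith [hT1, hT2, hT3, hT4, hsAAle, hpClower]
  calc ∑ a, ∑ b, |qE ψ (A a ⊗ₖ (B b)ᵀ) - qE ψ (C a ⊗ₖ (B b)ᵀ)|
      = ∑ a, ∑ b, |t a b| := by
        refine Finset.sum_congr rfl fun a _ => Finset.sum_congr rfl fun b _ => f1 a b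
    _ ≤ 4 * (1 - ∑ a, qE ψ (A a ⊗ₖ (A a)ᵀ)) + 4 * Real.sqrt (∑ a, pD a) := main
    _ = _ := rfl

end Main

end MTCaux

/-- finite-dimensional version of Lemma 3.3: with
`|ψ⟩ = (σ⊗I)|τ⟩` a unit vector, POVMs `A, B, C`,
`γ = E_x Σ_a ⟨ψ|(A_a^x − C_a^x)²⊗I|ψ⟩` and
`δ_A = 1 − E_x Σ_a ⟨ψ|A_a^x⊗(A_a^x)ᵀ|ψ⟩`, for any joint distribution `ν` on
pairs with first marginal `μ`,
`E_{(x,y)∼ν} Σ_{a,b} |⟨ψ|A_a^x⊗(B_b^y)ᵀ|ψ⟩ − ⟨ψ|C_a^x⊗(B_b^y)ᵀ|ψ⟩| ≤ 6(δ_A + √γ)`. -/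
theorem measurement_to_correlation_finiteDim {n : ℕ} {X 𝒜 : Type*}
    [Fintype X] [Fintype 𝒜]
    (μ : X → ℝ) (hμ0 : ∀ x, 0 ≤ μ x) (hμ1 : ∑ x, μ x = 1)
    (ν : X × X → ℝ) (hν0 : ∀ p, 0 ≤ ν p) (hν1 : ∑ p, ν p = 1)
    (hmarg : ∀ x, ∑ y, ν (x, y) = μ x)
    (σ : Matrix (Fin n) (Fin n) ℂ)
    (ψ : Fin n × Fin n → ℂ)
    (hψdef : ψ = (σ ⊗ₖ (1 : Matrix (Fin n) (Fin n) ℂ)) *ᵥ meVec n)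
    (hψ : star ψ ⬝ᵥ ψ = 1)
    (A B C : X → 𝒜 → Matrix (Fin n) (Fin n) ℂ)
    (hA : ∀ x a, (A x a).PosSemidef) (hAsum : ∀ x, ∑ a, A x a = 1)
    (hB : ∀ x a, (B x a).PosSemidef) (hBsum : ∀ x, ∑ a, B x a = 1)
    (hC : ∀ x a, (C x a).PosSemidef) (hCsum : ∀ x, ∑ a, C x a = 1)
    (γ δA : ℝ)
    (hγ : γ = ∑ x, μ x * ∑ a,
      (star ψ ⬝ᵥ ((((A x a - C x a) * (A x a - C x a)) ⊗ₖ (1 : Matrix (Fin n) (Fin n) ℂ))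
        *ᵥ ψ)).re)
    (hδA : δA = 1 - ∑ x, μ x * ∑ a,
      (star ψ ⬝ᵥ (((A x a) ⊗ₖ (A x a)ᵀ) *ᵥ ψ)).re) :
    ∑ p : X × X, ν p * ∑ a, ∑ b,
        |(star ψ ⬝ᵥ (((A p.1 a) ⊗ₖ (B p.2 b)ᵀ) *ᵥ ψ)).re
          - (star ψ ⬝ᵥ (((C p.1 a) ⊗ₖ (B p.2 b)ᵀ) *ᵥ ψ)).re|
      ≤ 6 * (δA + Real.sqrt γ) := by
  classical
  open MTCaux in
  -- abbreviations
  set g : X → ℝ := fun x => ∑ a, qE ψ (((A x a - C x a) * (A x a - C x a))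
      ⊗ₖ (1 : Matrix (Fin n) (Fin n) ℂ)) with hg
  set sAA : X → ℝ := fun x => ∑ a, qE ψ (A x a ⊗ₖ (A x a)ᵀ) with hsAA
  have hg0 : ∀ x, 0 ≤ g x := by
    intro x
    refine Finset.sum_nonneg fun a _ => qE_nonneg (kron_psd ?_ ?_)
    · have hD : (A x a - C x a).IsHermitian := (hA x a).1.sub (hC x a).1
      have := Matrix.posSemidef_conjTranspose_mul_self (A x a - C x a)
      rwa [hD] at this
    · exact Matrix.PosSemidef.one
  have hsAA1 : ∀ x, sAA x ≤ 1 := fun x => sAA_le_one ψ hψ (A x) (hA x) (hAsum x)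
  have key : ∀ x y : X,
      (∑ a, ∑ b, |qE ψ (A x a ⊗ₖ (B y b)ᵀ) - qE ψ (C x a ⊗ₖ (B y b)ᵀ)|)
        ≤ 4 * (1 - sAA x) + 4 * Real.sqrt (g x) := fun x y =>
    per_pair ψ hψ (A x) (B y) (C x) (hA x) (hAsum x) (hB y) (hBsum y) (hC x) (hCsum x)
  -- rewrite goal in terms of qE
  have goalEq : ∀ p : X × X, (∑ a, ∑ b,
        |(star ψ ⬝ᵥ (((A p.1 a) ⊗ₖ (B p.2 b)ᵀ) *ᵥ ψ)).re
          - (star ψ ⬝ᵥ (((C p.1 a) ⊗ₖ (B p.2 b)ᵀ) *ᵥ ψ)).re|)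
      = ∑ a, ∑ b, |qE ψ (A p.1 a ⊗ₖ (B p.2 b)ᵀ) - qE ψ (C p.1 a ⊗ₖ (B p.2 b)ᵀ)| := by
    intro p; rfl
  calc ∑ p : X × X, ν p * ∑ a, ∑ b,
        |(star ψ ⬝ᵥ (((A p.1 a) ⊗ₖ (B p.2 b)ᵀ) *ᵥ ψ)).re
          - (star ψ ⬝ᵥ (((C p.1 a) ⊗ₖ (B p.2 b)ᵀ) *ᵥ ψ)).re|
      ≤ ∑ p : X × X, ν p * (4 * (1 - sAA p.1) + 4 * Real.sqrt (g p.1)) := by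
        refine Finset.sum_le_sum fun p _ => ?_
        rw [goalEq p]
        exact mul_le_mul_of_nonneg_left (key p.1 p.2) (hν0 p)
    _ = ∑ x, ∑ y, ν (x, y) * (4 * (1 - sAA x) + 4 * Real.sqrt (g x)) := by
        rw [Fintype.sum_prod_type]
    _ = ∑ x, μ x * (4 * (1 - sAA x) + 4 * Real.sqrt (g x)) := by
        refine Finset.sum_congr rfl fun x _ => ?_
        rw [← Finset.sum_mul, hmarg]
    _ = 4 * (∑ x, μ x * (1 - sAA x)) + 4 * ∑ x, μ x * Real.sqrt (g x) := by
        rw [Finset.mul_sum, Finset.mul_sum, ← Finset.sum_add_distrib]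
        refine Finset.sum_congr rfl fun x _ => by ring
    _ ≤ 6 * (δA + Real.sqrt γ) := by
        have hδ : ∑ x, μ x * (1 - sAA x) = δA := by
          rw [hδA]
          rw [Finset.sum_congr rfl fun x _ => mul_one_sub (μ x) (sAA x),
            Finset.sum_sub_distrib, hμ1]
          rfl
        have hδ0 : 0 ≤ δA := by
          rw [← hδ]
          exact Finset.sum_nonneg fun x _ =>
            mul_nonneg (hμ0 x) (by linarith [hsAA1 x])
        have hγg : γ = ∑ x, μ x * g x := by rw [hγ]; rfl
        have hsq : ∑ x, μ x * Real.sqrt (g x) ≤ Real.sqrt γ := by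
          have h := Finset.sum_sq_le_sum_mul_sum_of_sq_eq_mul Finset.univ
            (r := fun x => μ x * Real.sqrt (g x)) (f := μ) (g := fun x => μ x * g x)
            (fun x _ => hμ0 x) (fun x _ => mul_nonneg (hμ0 x) (hg0 x))
            (fun x _ => by rw [mul_pow, Real.sq_sqrt (hg0 x)]; ring)
          rw [hμ1, one_mul, ← hγg] at h
          have hnn : 0 ≤ ∑ x, μ x * Real.sqrt (g x) :=
            Finset.sum_nonneg fun x _ => mul_nonneg (hμ0 x) (Real.sqrt_nonneg _)
          calc ∑ x, μ x * Real.sqrt (g x)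
              = Real.sqrt ((∑ x, μ x * Real.sqrt (g x)) ^ 2) := (Real.sqrt_sq hnn).symm
            _ ≤ Real.sqrt γ := Real.sqrt_le_sqrt h
        have hsg : 0 ≤ Real.sqrt γ := Real.sqrt_nonneg _
        rw [hδ]
        nlinarith [hsq, hδ0, hsg]
end
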